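/- arXiv:1503.07859 — 2 statements merged into one kernel-verified Lean document; each statement's English description precedes it below -/
import Mathlib

section
/- Ellipses with distinct eccentricities are not similar: for 0 < b < a and 0 < b' < a', if the ellipses x²/a² + y²/b² = 1 and x²/a'² + y²/b'² = 1 are related by a similarity transformation of ℝ², then b/a = b'/a'. -/
/-!
A similarity of ratio `r` multiplies diameters by `r`, and the ellipse with semi-axes `a ≥ b` has
diameter `2 a`, so `r a = a'`. A chord of length `2 a'` of the target ellipse must be a diameter
through its centre `0`, and similarities preserve midpoints (the target plane is strictly convex),
so the images of the major vertices `±(a, 0)` are antipodal and `f 0 = 0`. Hence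
`‖f p‖ = r ‖p‖`, and comparing the least distance to the centre on both ellipses, `b` and `b'`,
gives `r b = b'`.
-/

open EuclideanSpace

section Similarity

variable {V P W Q : Type*} [NormedAddCommGroup V] [NormedSpace ℝ V] [PseudoMetricSpace P]
  [NormedAddTorsor V P] [NormedAddCommGroup W] [NormedSpace ℝ W] [StrictConvexSpace ℝ W]
  [MetricSpace Q] [NormedAddTorsor W Q]

theorem map_midpoint_of_dist_eq_mul {f : P → Q} {r : ℝ}
    (hf : ∀ p q, dist (f p) (f q) = r * dist p q) (x y : P) :
    f (midpoint ℝ x y) = midpoint ℝ (f x) (f y) := by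
  apply eq_midpoint_of_dist_eq_half <;>
    rw [hf, hf] <;>
    simp only [dist_left_midpoint (𝕜 := ℝ), dist_midpoint_right (𝕜 := ℝ), Real.norm_ofNat] <;>
    ring

end Similarity

theorem eq_neg_of_norm_sub_eq_two_mul {E : Type*} [NormedAddCommGroup E] [InnerProductSpace ℝ E]
    {p q : E} {R : ℝ} (hp : ‖p‖ ≤ R) (hq : ‖q‖ ≤ R) (hpq : ‖p - q‖ = 2 * R) : q = -p := by
  have hR : 0 ≤ R := (norm_nonneg p).trans hp
  have h := parallelogram_law_with_norm ℝ p q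
  have hsum : ‖p + q‖ ^ 2 ≤ 0 := by
    nlinarith [pow_le_pow_left₀ (norm_nonneg p) hp 2, pow_le_pow_left₀ (norm_nonneg q) hq 2]
  rw [eq_neg_iff_add_eq_zero, add_comm, ← norm_eq_zero]
  exact pow_eq_zero_iff two_ne_zero |>.mp (le_antisymm hsum (sq_nonneg _))

theorem EuclideanSpace.norm_sq_fin_two (p : EuclideanSpace ℝ (Fin 2)) :
    ‖p‖ ^ 2 = p 0 ^ 2 + p 1 ^ 2 := by
  rw [real_norm_sq_eq, Fin.sum_univ_two]

def ellipse (a b : ℝ) : Set (EuclideanSpace ℝ (Fin 2)) :=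
  {p | p 0 ^ 2 / a ^ 2 + p 1 ^ 2 / b ^ 2 = 1}

section Ellipse

variable {a b : ℝ} {p : EuclideanSpace ℝ (Fin 2)}

theorem neg_mem_ellipse (hp : p ∈ ellipse a b) : -p ∈ ellipse a b := by
  simpa [ellipse] using hp

theorem major_vertex_mem_ellipse (ha : a ≠ 0) : !₂[a, 0] ∈ ellipse a b := by
  simp [ellipse, ha]

theorem minor_vertex_mem_ellipse (hb : b ≠ 0) : !₂[0, b] ∈ ellipse a b := by
  simp [ellipse, hb]

theorem norm_major_vertex (ha : 0 ≤ a) : ‖!₂[a, 0]‖ = a := by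
  rw [← sq_eq_sq₀ (norm_nonneg _) ha, norm_sq_fin_two]
  simp

theorem norm_minor_vertex (hb : 0 ≤ b) : ‖!₂[0, b]‖ = b := by
  rw [← sq_eq_sq₀ (norm_nonneg _) hb, norm_sq_fin_two]
  simp

theorem sq_norm_mem_Icc_of_mem_ellipse (hb : 0 < b) (hba : b ≤ a) (hp : p ∈ ellipse a b) :
    ‖p‖ ^ 2 ∈ Set.Icc (b ^ 2) (a ^ 2) := by
  have ha : 0 < a := hb.trans_le hba
  set u := p 0 ^ 2 / a ^ 2
  set v := p 1 ^ 2 / b ^ 2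
  have hu : 0 ≤ u := by positivity
  have hv : 0 ≤ v := by positivity
  have huv : u + v = 1 := hp
  have hnorm : ‖p‖ ^ 2 = a ^ 2 * u + b ^ 2 * v := by
    rw [norm_sq_fin_two]
    simp only [u, v]
    field_simp
  have hsq : b ^ 2 ≤ a ^ 2 := pow_le_pow_left₀ hb.le hba 2
  constructor <;> nlinarith

theorem norm_le_of_mem_ellipse (hb : 0 < b) (hba : b ≤ a) (hp : p ∈ ellipse a b) : ‖p‖ ≤ a :=
  (sq_le_sq₀ (norm_nonneg _) (hb.le.trans hba)).mp (sq_norm_mem_Icc_of_mem_ellipse hb hba hp).2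

theorem le_norm_of_mem_ellipse (hb : 0 < b) (hba : b ≤ a) (hp : p ∈ ellipse a b) : b ≤ ‖p‖ :=
  (sq_le_sq₀ hb.le (norm_nonneg _)).mp (sq_norm_mem_Icc_of_mem_ellipse hb hba hp).1

theorem isLeast_norm_ellipse (hb : 0 < b) (hba : b ≤ a) : IsLeast (norm '' ellipse a b) b :=
  ⟨⟨_, minor_vertex_mem_ellipse hb.ne', norm_minor_vertex hb.le⟩,
    Set.forall_mem_image.2 fun _ hp => le_norm_of_mem_ellipse hb hba hp⟩

theorem dist_le_of_mem_ellipse (hb : 0 < b) (hba : b ≤ a) {q : EuclideanSpace ℝ (Fin 2)}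
    (hp : p ∈ ellipse a b) (hq : q ∈ ellipse a b) : dist p q ≤ 2 * a := by
  rw [dist_eq_norm, two_mul]
  exact (norm_sub_le p q).trans
    (add_le_add (norm_le_of_mem_ellipse hb hba hp) (norm_le_of_mem_ellipse hb hba hq))

theorem dist_major_vertices (ha : 0 ≤ a) : dist !₂[a, 0] (-!₂[a, 0]) = 2 * a := by
  rw [dist_eq_norm, sub_neg_eq_add, ← two_smul ℝ, norm_smul, norm_major_vertex ha]
  norm_num

end Ellipse

section EllipseSimilarity

variable {a b a' b' r : ℝ} {f : EuclideanSpace ℝ (Fin 2) → EuclideanSpace ℝ (Fin 2)}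

theorem mul_major_eq_of_image_ellipse (hb : 0 < b) (hba : b ≤ a) (hb' : 0 < b') (hba' : b' ≤ a')
    (hr : 0 ≤ r) (hf : ∀ p q, dist (f p) (f q) = r * dist p q)
    (himg : f '' ellipse a b = ellipse a' b') : r * a = a' := by
  have ha : 0 < a := hb.trans_le hba
  have ha' : 0 < a' := hb'.trans_le hba'
  have hv := major_vertex_mem_ellipse (b := b) ha.ne'
  have hv' := major_vertex_mem_ellipse (b := b') ha'.ne'
  apply le_antisymm
  · have hle := dist_le_of_mem_ellipse hb' hba' (himg ▸ Set.mem_image_of_mem f hv)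
      (himg ▸ Set.mem_image_of_mem f (neg_mem_ellipse hv))
    rw [hf, dist_major_vertices ha.le] at hle
    linarith
  · obtain ⟨u, hu, hfu⟩ : !₂[a', 0] ∈ f '' ellipse a b := himg ▸ hv'
    obtain ⟨w, hw, hfw⟩ : -!₂[a', 0] ∈ f '' ellipse a b := himg ▸ neg_mem_ellipse hv'
    have hdist := hf u w
    rw [hfu, hfw, dist_major_vertices ha'.le] at hdist
    nlinarith [dist_le_of_mem_ellipse hb hba hu hw]

theorem map_zero_of_image_ellipse (hb : 0 < b) (hba : b ≤ a) (hb' : 0 < b') (hba' : b' ≤ a')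
    (hr : 0 ≤ r) (hf : ∀ p q, dist (f p) (f q) = r * dist p q)
    (himg : f '' ellipse a b = ellipse a' b') : f 0 = 0 := by
  have ha : 0 < a := hb.trans_le hba
  have hv := major_vertex_mem_ellipse (b := b) ha.ne'
  have hfv : f !₂[a, 0] ∈ ellipse a' b' := himg ▸ Set.mem_image_of_mem f hv
  have hfnv : f (-!₂[a, 0]) ∈ ellipse a' b' := himg ▸ Set.mem_image_of_mem f (neg_mem_ellipse hv)
  have hneg : f (-!₂[a, 0]) = -f !₂[a, 0] := by
    refine eq_neg_of_norm_sub_eq_two_mul (norm_le_of_mem_ellipse hb' hba' hfv)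
      (norm_le_of_mem_ellipse hb' hba' hfnv) ?_
    rw [← dist_eq_norm, hf, dist_major_vertices ha.le, mul_left_comm,
      mul_major_eq_of_image_ellipse hb hba hb' hba' hr hf himg]
  calc f 0 = f (midpoint ℝ !₂[a, 0] (-!₂[a, 0])) := by rw [midpoint_self_neg]
    _ = midpoint ℝ (f !₂[a, 0]) (-f !₂[a, 0]) := by rw [map_midpoint_of_dist_eq_mul hf, hneg]
    _ = 0 := midpoint_self_neg ℝ _

theorem mul_minor_eq_of_image_ellipse (hb : 0 < b) (hba : b ≤ a) (hb' : 0 < b') (hba' : b' ≤ a')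
    (hr : 0 ≤ r) (hf : ∀ p q, dist (f p) (f q) = r * dist p q)
    (himg : f '' ellipse a b = ellipse a' b') : r * b = b' := by
  have hnorm (p : EuclideanSpace ℝ (Fin 2)) : ‖f p‖ = r * ‖p‖ := by
    rw [← dist_zero_right, ← map_zero_of_image_ellipse hb hba hb' hba' hr hf himg, hf,
      dist_zero_right]
  have himg_norm : norm '' ellipse a' b' = (r * ·) '' (norm '' ellipse a b) := by
    rw [← himg, Set.image_image, Set.image_image]
    simp only [hnorm]
  refine ((monotone_mul_left_of_nonneg hr).map_isLeast (isLeast_norm_ellipse hb hba)).unique ?_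
  rw [← himg_norm]
  exact isLeast_norm_ellipse hb' hba'

end EllipseSimilarity

/-- Ellipses with distinct eccentricities are not similar. -/
theorem ellipses_similar_iff (a b a' b' : ℝ) (hb : 0 < b) (hba : b < a)
    (hb' : 0 < b') (hba' : b' < a')
    (f : EuclideanSpace ℝ (Fin 2) → EuclideanSpace ℝ (Fin 2)) (r : ℝ) (hr : 0 < r)
    (hf : ∀ p q, dist (f p) (f q) = r * dist p q)
    (himg : f '' {p : EuclideanSpace ℝ (Fin 2) | (p 0) ^ 2 / a ^ 2 + (p 1) ^ 2 / b ^ 2 = 1}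
        = {p : EuclideanSpace ℝ (Fin 2) | (p 0) ^ 2 / a' ^ 2 + (p 1) ^ 2 / b' ^ 2 = 1}) :
    b / a = b' / a' := by
  have hra := mul_major_eq_of_image_ellipse hb hba.le hb' hba'.le hr.le hf himg
  have hrb := mul_minor_eq_of_image_ellipse hb hba.le hb' hba'.le hr.le hf himg
  rw [← hra, ← hrb, mul_div_mul_left _ _ hr.ne']
end

section
/- For a squarefree positive integer n, n is a congruent number (the area of a right triangle with rational sides) if and only if the elliptic curve y² = x³ - n²x has a rational point (x, y) with y ≠ 0. -/
/-!
A right triangle `(a, b, c)` of area `n` gives the point `((c/2)², c(a² - b²)/8)` on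
`y² = x³ - n²x`, whose `y`-coordinate is nonzero because an isosceles right triangle would make
`2` a rational square. Conversely, a point `(x, y)` with `y ≠ 0` gives the right triangle with
sides `|(x² - n²)/y|`, `|2nx/y|`, `|(x² + n²)/y|` and area `n`.
-/

def IsCongruentNumber (n : ℕ) : Prop :=
  ∃ a b c : ℚ, 0 < a ∧ 0 < b ∧ 0 < c ∧ a ^ 2 + b ^ 2 = c ^ 2 ∧ a * b / 2 = n

section Field

variable {K : Type*} [Field K]

theorem curve_eq_of_right_triangle [CharZero K] {n a b c : K} (habc : a ^ 2 + b ^ 2 = c ^ 2)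
    (harea : a * b / 2 = n) :
    (c * (a ^ 2 - b ^ 2) / 8) ^ 2 = ((c / 2) ^ 2) ^ 3 - n ^ 2 * (c / 2) ^ 2 := by
  rw [← harea]
  linear_combination (c ^ 2 * (a ^ 2 + b ^ 2 + c ^ 2) / 64) * habc

theorem sq_ne_sq_of_right_triangle {a b c : K} (h2 : ¬IsSquare (2 : K)) (hc : c ≠ 0)
    (habc : a ^ 2 + b ^ 2 = c ^ 2) : a ^ 2 ≠ b ^ 2 := by
  intro hab
  have hc2 : c ^ 2 = 2 * a ^ 2 := by linear_combination -habc - hab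
  have ha : a ≠ 0 := by
    rintro rfl
    exact pow_ne_zero 2 hc (by simpa using hc2)
  exact h2 ⟨c / a, by rw [div_mul_div_comm, ← sq, ← sq, hc2]; field_simp⟩

theorem pythagorean_of_curve_point (n x y : K) :
    ((x ^ 2 - n ^ 2) / y) ^ 2 + (2 * n * x / y) ^ 2 = ((x ^ 2 + n ^ 2) / y) ^ 2 := by
  ring

theorem area_eq_of_curve_point [NeZero (2 : K)] {n x y : K} (hy : y ≠ 0)
    (h : y ^ 2 = x ^ 3 - n ^ 2 * x) :
    (x ^ 2 - n ^ 2) / y * (2 * n * x / y) / 2 = n := by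
  field_simp
  linear_combination (-n) * h

theorem ne_zero_and_sq_sub_sq_ne_zero_of_curve_point {n x y : K} (hy : y ≠ 0)
    (h : y ^ 2 = x ^ 3 - n ^ 2 * x) : x ≠ 0 ∧ x ^ 2 - n ^ 2 ≠ 0 := by
  have hxy : x * (x ^ 2 - n ^ 2) = y ^ 2 := by rw [h]; ring
  exact mul_ne_zero_iff.mp (hxy ▸ pow_ne_zero 2 hy)

end Field

theorem exists_right_triangle_of_curve_point {K : Type*} [Field K] [LinearOrder K]
    [IsStrictOrderedRing K] {n x y : K} (hn : 0 < n) (hy : y ≠ 0)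
    (h : y ^ 2 = x ^ 3 - n ^ 2 * x) :
    ∃ a b c : K, 0 < a ∧ 0 < b ∧ 0 < c ∧ a ^ 2 + b ^ 2 = c ^ 2 ∧ a * b / 2 = n := by
  obtain ⟨hx, hxn⟩ := ne_zero_and_sq_sub_sq_ne_zero_of_curve_point hy h
  refine ⟨|(x ^ 2 - n ^ 2) / y|, |2 * n * x / y|, |(x ^ 2 + n ^ 2) / y|, ?_, ?_, ?_, ?_, ?_⟩
  · positivity
  · positivity
  · positivity
  · simpa only [sq_abs] using pythagorean_of_curve_point n x y
  · calc |(x ^ 2 - n ^ 2) / y| * |2 * n * x / y| / 2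
        = |(x ^ 2 - n ^ 2) / y * (2 * n * x / y) / 2| := by rw [abs_div _ (2 : K), abs_mul, abs_two]
      _ = n := by rw [area_eq_of_curve_point hy h, abs_of_pos hn]

theorem congruent_iff_rational_point_general (n : ℕ) (hn : 0 < n) :
    IsCongruentNumber n ↔ ∃ x y : ℚ, y ≠ 0 ∧ y ^ 2 = x ^ 3 - (n : ℚ) ^ 2 * x := by
  constructor
  · rintro ⟨a, b, c, -, -, hc, habc, harea⟩
    have hab : a ^ 2 ≠ b ^ 2 := sq_ne_sq_of_right_triangle (by norm_num) hc.ne' habc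
    exact ⟨(c / 2) ^ 2, c * (a ^ 2 - b ^ 2) / 8,
      div_ne_zero (mul_ne_zero hc.ne' (sub_ne_zero.mpr hab)) (by norm_num),
      curve_eq_of_right_triangle habc harea⟩
  · rintro ⟨x, y, hy, h⟩
    exact exists_right_triangle_of_curve_point (by exact_mod_cast hn) hy h

/-- A squarefree positive `n` is a congruent number iff `y² = x³ - n²x` has a rational
point with `y ≠ 0`. -/
theorem congruent_iff_rational_point (n : ℕ) (hn : 0 < n) (hsf : Squarefree n) :
    IsCongruentNumber n ↔ ∃ x y : ℚ, y ≠ 0 ∧ y ^ 2 = x ^ 3 - (n : ℚ) ^ 2 * x :=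
  congruent_iff_rational_point_general n hn
end
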